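/- arXiv:1606.01230 — 5 statements merged into one kernel-verified Lean document; each statement's English description precedes it below -/
import Mathlib

section
/- With the lifting construction in F_p^{n+2}, every two-dimensional subspace of F_p^{n+2} contains at most one triangle from X' × Y' × Z': if (x_i', y_j', z_k') is a triangle (i.e., x_i' + y_j' + z_k' = 0) spanning a 2-dimensional subspace U, then the only triangle in X' × Y' × Z' contained in U is (x_i', y_j', z_k'). -/
/-! The last two coordinates of the lifts, `(1, 0)` for `X'` and `(-1, 1)` for `Y'`, are linearly
independent. So if `x'_{i'} = α x'_i + β y'_j`, comparing these coordinates forces `α = 1, β = 0`,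
i.e. `x'_{i'} = x'_i`; likewise `y'_{j'} = y'_j`, and then `z'_{k'} = z'_k` since both complete
the same pair to a triangle. -/

section SpanPair

variable {R M N : Type*} [Semiring R] [AddCommMonoid M] [AddCommMonoid N]
  [Module R M] [Module R N] {f : M →ₗ[R] N} {u v w : M}

theorem eq_left_of_mem_span_pair_of_map_eq (hli : LinearIndependent R ![f u, f v])
    (hw : w ∈ Submodule.span R {u, v}) (hf : f w = f u) : w = u := by
  obtain ⟨a, b, rfl⟩ := Submodule.mem_span_pair.mp hw
  obtain ⟨rfl, rfl⟩ := hli.eq_of_pair (s' := 1) (t' := 0) (by simpa using hf)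
  simp

theorem eq_right_of_mem_span_pair_of_map_eq (hli : LinearIndependent R ![f u, f v])
    (hw : w ∈ Submodule.span R {u, v}) (hf : f w = f v) : w = v := by
  obtain ⟨a, b, rfl⟩ := Submodule.mem_span_pair.mp hw
  obtain ⟨rfl, rfl⟩ := hli.eq_of_pair (s' := 0) (t' := 1) (by simpa using hf)
  simp

end SpanPair

theorem linearIndependent_pair_one_zero_neg_one_one (R : Type*) [Ring R] :
    LinearIndependent R ![((1 : R), (0 : R)), (-1, 1)] := by
  refine LinearIndependent.pair_iff.mpr fun s t hst => ?_
  obtain ⟨hst₁, rfl⟩ : s - t = 0 ∧ t = 0 := by simpa [sub_eq_add_neg] using hst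
  simpa using hst₁

theorem stmt_3_general (p n m : ℕ)
    (x y : Fin m → (Fin n → ZMod p))
    (x' y' z' : Fin m → (Fin n → ZMod p) × ZMod p × ZMod p)
    (hx' : ∀ i, x' i = (x i, 1, 0))
    (hy' : ∀ i, y' i = (y i, -1, 1)) :
    ∀ i j k, x' i + y' j + z' k = 0 →
      ∀ i' j' k', x' i' + y' j' + z' k' = 0 →
        x' i' ∈ Submodule.span (ZMod p) {x' i, y' j} →
        y' j' ∈ Submodule.span (ZMod p) {x' i, y' j} →
        z' k' ∈ Submodule.span (ZMod p) {x' i, y' j} →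
        x' i' = x' i ∧ y' j' = y' j ∧ z' k' = z' k := by
  intro i j k hijk i' j' k' hi'j'k' hxi' hyj' _
  let last2 := LinearMap.snd (ZMod p) (Fin n → ZMod p) (ZMod p × ZMod p)
  have hli : LinearIndependent (ZMod p) ![last2 (x' i), last2 (y' j)] := by
    simpa [last2, hx', hy'] using linearIndependent_pair_one_zero_neg_one_one (ZMod p)
  have hxi : x' i' = x' i := eq_left_of_mem_span_pair_of_map_eq hli hxi' (by simp [last2, hx'])
  have hyj : y' j' = y' j := eq_right_of_mem_span_pair_of_map_eq hli hyj' (by simp [last2, hy'])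
  refine ⟨hxi, hyj, add_left_cancel (a := x' i + y' j) ?_⟩
  rw [hijk, ← hxi, ← hyj, hi'j'k']

/-- With the lifting construction, every two-dimensional subspace contains at most one
triangle from X' × Y' × Z': the span of a triangle contains no other triangle. -/
theorem stmt_3 (p n m : ℕ) [Fact p.Prime]
    (x y z : Fin m → (Fin n → ZMod p))
    (htri : ∀ i, x i + y i + z i = 0)
    (hx : Function.Injective x) (hy : Function.Injective y) (hz : Function.Injective z)
    (x' y' z' : Fin m → (Fin n → ZMod p) × ZMod p × ZMod p)
    (hx' : ∀ i, x' i = (x i, 1, 0))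
    (hy' : ∀ i, y' i = (y i, -1, 1))
    (hz' : ∀ i, z' i = (z i, 0, -1)) :
    ∀ i j k, x' i + y' j + z' k = 0 →
      ∀ i' j' k', x' i' + y' j' + z' k' = 0 →
        x' i' ∈ Submodule.span (ZMod p) {x' i, y' j} →
        y' j' ∈ Submodule.span (ZMod p) {x' i, y' j} →
        z' k' ∈ Submodule.span (ZMod p) {x' i, y' j} →
        x' i' = x' i ∧ y' j' = y' j ∧ z' k' = z' k :=
  stmt_3_general p n m x y x' y' z' hx' hy'
end

section
/- Let {(x_i, y_i, z_i)}_{i=1}^m be a multicolored sum-free collection in F_p^n, and form X' = {x_i} × F_p^l, Y' = {y_i} × F_p^l, Z' = {z_i} × F_p^l in F_p^{n+l}. Then any sets of deletions D_X ⊆ X', D_Y ⊆ Y', D_Z ⊆ Z' whose removal leaves no triangle (triple summing to zero) in (X'∖D_X) × (Y'∖D_Y) × (Z'∖D_Z) must satisfy |D_X| + |D_Y| + |D_Z| ≥ m · p^l. -/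
/-!
Over each index `i` the three blown-up fibres `{x i} × H`, `{y i} × H`, `{z i} × H` contain
`|H|` triangles `(x i, a) + (y i, b) + (z i, -a-b)`. If fewer than `|H|` points are deleted there,
then one point `c` of the third fibre survives and the survivors `A`, `B` of the first two fibres
satisfy `|A| + |B| > |H|`, so `A` meets `-c - B` by pigeonhole and a triangle survives. Since the
`x i` (and the `y i`, `z i`) are distinct, the fibres over different indices are disjoint, and
summing over `i` gives `m |H|` deletions.
-/

open Finset

def IsMulticoloredSumFree {ι G : Type*} [Add G] [Zero G] (x y z : ι → G) : Prop :=
  ∀ i j k, x i + y j + z k = 0 ↔ (i = j ∧ j = k)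

namespace IsMulticoloredSumFree

variable {ι G : Type*} [Add G] [Zero G] {x y z : ι → G}

theorem add_add_eq_zero (hs : IsMulticoloredSumFree x y z) (i : ι) : x i + y i + z i = 0 :=
  (hs i i i).2 ⟨rfl, rfl⟩

theorem injective_left (hs : IsMulticoloredSumFree x y z) : Function.Injective x := by
  intro i j hij
  exact ((hs i j j).1 (hij ▸ hs.add_add_eq_zero j)).1

theorem injective_middle (hs : IsMulticoloredSumFree x y z) : Function.Injective y := by
  intro i j hij
  exact ((hs j i j).1 (hij ▸ hs.add_add_eq_zero j)).1.symm

theorem injective_right (hs : IsMulticoloredSumFree x y z) : Function.Injective z := by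
  intro i j hij
  exact ((hs j j i).1 (hij ▸ hs.add_add_eq_zero j)).2.symm

end IsMulticoloredSumFree

namespace Finset

theorem exists_add_add_eq_zero_of_card_add_card_add_card_lt {H : Type*} [AddCommGroup H]
    [Fintype H] [DecidableEq H] {A B C : Finset H}
    (hcard : #A + #B + #C < Fintype.card H) : ∃ a ∉ A, ∃ b ∉ B, ∃ c ∉ C, a + b + c = 0 := by
  obtain ⟨c, hc⟩ : ∃ c, c ∉ C := by
    by_contra! hC
    have : #C = Fintype.card H := by rw [eq_univ_of_forall hC, card_univ]
    omega
  have hcard' : #(univ : Finset H) < #Aᶜ + #(Bᶜ.image (fun b ↦ -c - b)) := by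
    rw [card_image_of_injective _ (sub_right_injective), card_compl, card_compl, card_univ]
    omega
  obtain ⟨a, ha⟩ := inter_nonempty_of_card_lt_card_add_card (subset_univ _) (subset_univ _) hcard'
  obtain ⟨haA, haB⟩ := mem_inter.1 ha
  obtain ⟨b, hb, rfl⟩ := mem_image.1 haB
  exact ⟨-c - b, mem_compl.1 haA, b, mem_compl.1 hb, c, hc, by abel⟩

variable {α β : Type*}

noncomputable def fiber (D : Finset (α × β)) (a : α) : Finset β :=
  D.preimage (Prod.mk a) (Prod.mk_right_injective a).injOn

@[simp]
theorem mem_fiber {D : Finset (α × β)} {a : α} {b : β} : b ∈ D.fiber a ↔ (a, b) ∈ D :=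
  mem_preimage

theorem sum_card_fiber_le {ι : Type*} [Fintype ι] {f : ι → α} (hf : Function.Injective f)
    (D : Finset (α × β)) : ∑ i, #(D.fiber (f i)) ≤ #D := by
  rw [← card_sigma]
  refine card_le_card_of_injOn (fun ib ↦ (f ib.1, ib.2)) (fun ib hib ↦ ?_) (fun ib _ jc _ h ↦ ?_)
  · simpa using hib
  · obtain ⟨i, b⟩ := ib
    obtain ⟨j, c⟩ := jc
    obtain ⟨hij, rfl⟩ := Prod.ext_iff.1 h
    cases hf hij
    rfl

theorem card_le_card_fiber_add_card_fiber_add_card_fiber {H : Type*} [AddCommGroup H]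
    [Fintype H] [DecidableEq H] {DX DY DZ : Finset (α × H)} {u v w : α}
    (hdestroy : ∀ a b c : H, (u, a) ∉ DX → (v, b) ∉ DY → (w, c) ∉ DZ → a + b + c ≠ 0) :
    Fintype.card H ≤ #(DX.fiber u) + #(DY.fiber v) + #(DZ.fiber w) := by
  by_contra! hlt
  obtain ⟨a, ha, b, hb, c, hc, habc⟩ := exists_add_add_eq_zero_of_card_add_card_add_card_lt hlt
  exact hdestroy a b c (by simpa using ha) (by simpa using hb) (by simpa using hc) habc

end Finset

theorem IsMulticoloredSumFree.card_mul_card_le_card_add_card_add_card {ι G H : Type*} [Fintype ι]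
    [Add G] [Zero G] [AddCommGroup H] [Fintype H] [DecidableEq H] {x y z : ι → G}
    (hs : IsMulticoloredSumFree x y z) {DX DY DZ : Finset (G × H)}
    (hdestroy : ∀ i a b c, (x i, a) ∉ DX → (y i, b) ∉ DY → (z i, c) ∉ DZ → a + b + c ≠ 0) :
    Fintype.card ι * Fintype.card H ≤ #DX + #DY + #DZ := by
  calc Fintype.card ι * Fintype.card H = ∑ _i : ι, Fintype.card H := by simp
    _ ≤ ∑ i, (#(DX.fiber (x i)) + #(DY.fiber (y i)) + #(DZ.fiber (z i))) :=
      sum_le_sum fun i _ ↦ card_le_card_fiber_add_card_fiber_add_card_fiber (hdestroy i)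
    _ = ∑ i, #(DX.fiber (x i)) + ∑ i, #(DY.fiber (y i)) + ∑ i, #(DZ.fiber (z i)) := by
      rw [sum_add_distrib, sum_add_distrib]
    _ ≤ #DX + #DY + #DZ := by
      gcongr
      exacts [sum_card_fiber_le hs.injective_left DX, sum_card_fiber_le hs.injective_middle DY,
        sum_card_fiber_le hs.injective_right DZ]

theorem stmt_7_general (p n l m : ℕ) [Fact p.Prime]
    (x y z : Fin m → (Fin n → ZMod p))
    (h : ∀ i j k, x i + y j + z k = 0 ↔ (i = j ∧ j = k))
    (DX DY DZ : Finset ((Fin n → ZMod p) × (Fin l → ZMod p)))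
    (hdestroy : ∀ u ∈ (Finset.univ.image x ×ˢ (Finset.univ : Finset (Fin l → ZMod p))) \ DX,
      ∀ v ∈ (Finset.univ.image y ×ˢ (Finset.univ : Finset (Fin l → ZMod p))) \ DY,
      ∀ w ∈ (Finset.univ.image z ×ˢ (Finset.univ : Finset (Fin l → ZMod p))) \ DZ,
        u + v + w ≠ 0) :
    m * p ^ l ≤ DX.card + DY.card + DZ.card := by
  have hs : IsMulticoloredSumFree x y z := h
  have hcard : Fintype.card (Fin l → ZMod p) = p ^ l := by simp
  rw [← hcard, ← Fintype.card_fin m]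
  refine hs.card_mul_card_le_card_add_card_add_card fun i a b c ha hb hc habc ↦ ?_
  refine hdestroy (x i, a) (by simpa using ha) (y i, b) (by simpa using hb) (z i, c)
    (by simpa using hc) ?_
  exact Prod.ext (hs.add_add_eq_zero i) habc

/-- For the blow-up of a multicolored sum-free collection, any deletion sets
destroying all triangles must have total size at least m · p^l. -/
theorem stmt_7 (p n l m : ℕ) [Fact p.Prime]
    (x y z : Fin m → (Fin n → ZMod p))
    (h : ∀ i j k, x i + y j + z k = 0 ↔ (i = j ∧ j = k))
    (DX DY DZ : Finset ((Fin n → ZMod p) × (Fin l → ZMod p)))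
    (hDX : DX ⊆ Finset.univ.image x ×ˢ (Finset.univ : Finset (Fin l → ZMod p)))
    (hDY : DY ⊆ Finset.univ.image y ×ˢ (Finset.univ : Finset (Fin l → ZMod p)))
    (hDZ : DZ ⊆ Finset.univ.image z ×ˢ (Finset.univ : Finset (Fin l → ZMod p)))
    (hdestroy : ∀ u ∈ (Finset.univ.image x ×ˢ (Finset.univ : Finset (Fin l → ZMod p))) \ DX,
      ∀ v ∈ (Finset.univ.image y ×ˢ (Finset.univ : Finset (Fin l → ZMod p))) \ DY,
      ∀ w ∈ (Finset.univ.image z ×ˢ (Finset.univ : Finset (Fin l → ZMod p))) \ DZ,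
        u + v + w ≠ 0) :
    m * p ^ l ≤ DX.card + DY.card + DZ.card :=
  stmt_7_general p n l m x y z h DX DY DZ hdestroy
end

section
/- Assume the multicolored sum-free bound: any collection {(a_i,b_i,c_i)}_{i=1}^T in F_p^d with a_i + b_j + c_k = 0 iff i = j = k has T ≤ p^{(1−c_p)d}, where 0 < c_p < 1. Let 0 < ρ ≤ 1/(5p³) and let X, Y, Z ⊂ F_p^n ∖ {0} be pairwise disjoint sets such that any two vectors in X ∪ Y ∪ Z are linearly independent, every 2-dimensional subspace contains at most one triangle of X×Y×Z, and every element of X ∪ Y ∪ Z lies in at most ρN triangles (N = p^n). If the total number of triangles in X × Y × Z is δN², then δ ≤ 125 p² ρ^{1+c_p}. -/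
/-!
Average over all matrices `Φ ∈ 𝔽_p^{m×n}` with `m = n - d`, where `p^d ≈ 1/(5ρ)`: the kernel of `Φ`
plays the role of a random subspace of dimension at least `d`. A triangle lies in `ker Φ` with
probability `p^{-2m}`. The triangles in `ker Φ` sharing no vertex with another triangle in `ker Φ`
form a multicolored sum-free family there, so there are at most `|ker Φ|^{1-c}` of them. The
remaining ones are covered by the pairs of distinct triangles sharing a vertex; there are at most
`3ρN·|T|` such pairs, and since no plane contains two triangles, the four vectors of such a pair
span a space of dimension at least 3, which `ker Φ` contains with probability at most `p^{-3m}`.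
As `3ρp^d ≤ 3/5`, comparing expectations gives `|T| ≤ (45/16) p^{(1-c)d} p^{2m}`, that is
`δ ≤ (45/16) p^{-(1+c)d} ≤ 125 p² ρ^{1+c}`.
-/

open Finset Matrix Module

theorem Finset.sum_card_filter_comm {α β : Type*} (s : Finset α) (t : Finset β)
    (r : α → β → Prop) [∀ a b, Decidable (r a b)] :
    ∑ a ∈ s, #{b ∈ t | r a b} = ∑ b ∈ t, #{a ∈ s | r a b} :=
  sum_card_bipartiteAbove_eq_sum_card_bipartiteBelow r

section MatrixCount

variable {K : Type*} [Field K] [Fintype K] {m n k : ℕ}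

theorem pow_le_pow_mul_natCard_ker_mulVecLin (Φ : Matrix (Fin m) (Fin n) K) :
    Nat.card K ^ n ≤ Nat.card K ^ m * Nat.card (LinearMap.ker Φ.mulVecLin) := by
  have hsum := LinearMap.finrank_range_add_finrank_ker Φ.mulVecLin
  have hrange : finrank K (LinearMap.range Φ.mulVecLin) ≤ m :=
    (Φ.rank_le_card_height).trans_eq (Fintype.card_fin m)
  have : Module.Finite K (LinearMap.ker Φ.mulVecLin) := Module.Finite.of_finite
  rw [Module.finrank_fin_fun] at hsum
  rw [Module.natCard_eq_pow_finrank (K := K) (V := LinearMap.ker Φ.mulVecLin), ← pow_add]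
  exact Nat.pow_le_pow_right Nat.card_pos (by omega)

theorem natCard_ker_mulVecLin_mul_pow {v : Fin k → Fin n → K} (hv : LinearIndependent K v) :
    Nat.card (LinearMap.ker (of v).mulVecLin) * Nat.card K ^ k = Nat.card K ^ n := by
  have hrank : finrank K (LinearMap.range (of v).mulVecLin) = k := by
    rw [← Matrix.rank, Matrix.rank_eq_finrank_span_row]
    exact (finrank_span_eq_card hv).trans (Fintype.card_fin k)
  have hsum := LinearMap.finrank_range_add_finrank_ker (of v).mulVecLin
  rw [hrank, Module.finrank_fin_fun] at hsum
  have : Module.Finite K (LinearMap.ker (of v).mulVecLin) := Module.Finite.of_finite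
  rw [Module.natCard_eq_pow_finrank (K := K), ← pow_add, add_comm, hsum]

variable [DecidableEq K]

theorem card_filter_mulVec_eq_zero_mul_pow {v : Fin k → Fin n → K} (hv : LinearIndependent K v) :
    #{Φ : Matrix (Fin m) (Fin n) K | ∀ i, Φ *ᵥ v i = 0} * (Nat.card K ^ k) ^ m
      = (Nat.card K ^ n) ^ m := by
  have hrows : ∀ Φ : Matrix (Fin m) (Fin n) K,
      (∀ i, Φ *ᵥ v i = 0) ↔ ∀ r, Φ r ∈ LinearMap.ker (of v).mulVecLin := by
    intro Φ
    simp only [LinearMap.mem_ker, mulVecLin_apply, funext_iff, mulVec, of_apply, Pi.zero_apply]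
    simp_rw [dotProduct_comm (Φ _)]
    exact forall_comm
  rw [← Fintype.card_subtype, ← Nat.card_eq_fintype_card,
    Nat.card_congr ((Equiv.subtypeEquivRight hrows).trans (Equiv.subtypePiEquivPi)),
    Nat.card_pi, prod_const, card_univ, Fintype.card_fin, ← mul_pow,
    natCard_ker_mulVecLin_mul_pow hv]

theorem card_filter_mulVec_pair_eq_zero_mul_pow {x y : Fin n → K}
    (hxy : LinearIndependent K ![x, y]) :
    #{Φ : Matrix (Fin m) (Fin n) K | Φ *ᵥ x = 0 ∧ Φ *ᵥ y = 0} * (Nat.card K ^ 2) ^ m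
      = (Nat.card K ^ n) ^ m := by
  simpa [Fin.forall_fin_two] using card_filter_mulVec_eq_zero_mul_pow (m := m) hxy

theorem card_filter_mulVec_two_pairs_eq_zero_mul_pow_le {x y x' y' : Fin n → K}
    (hxy : LinearIndependent K ![x, y])
    (hspan : ¬(x' ∈ Submodule.span K (Set.range ![x, y]) ∧
      y' ∈ Submodule.span K (Set.range ![x, y]))) :
    #{Φ : Matrix (Fin m) (Fin n) K | (Φ *ᵥ x = 0 ∧ Φ *ᵥ y = 0) ∧ (Φ *ᵥ x' = 0 ∧ Φ *ᵥ y' = 0)} *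
      (Nat.card K ^ 3) ^ m ≤ (Nat.card K ^ n) ^ m := by
  obtain ⟨u, hu, hkill⟩ : ∃ u ∉ Submodule.span K (Set.range ![x, y]),
      ∀ Φ : Matrix (Fin m) (Fin n) K, Φ *ᵥ x' = 0 → Φ *ᵥ y' = 0 → Φ *ᵥ u = 0 := by
    by_cases hx' : x' ∈ Submodule.span K (Set.range ![x, y])
    · exact ⟨y', fun hy' => hspan ⟨hx', hy'⟩, fun _ _ h => h⟩
    · exact ⟨x', hx', fun _ h _ => h⟩
  have hli : LinearIndependent K ![u, x, y] := linearIndependent_finCons.mpr ⟨hxy, hu⟩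
  calc _ ≤ #{Φ : Matrix (Fin m) (Fin n) K | ∀ i, Φ *ᵥ ![u, x, y] i = 0} *
        (Nat.card K ^ 3) ^ m := by
        refine Nat.mul_le_mul_right _ (card_le_card fun Φ => ?_)
        simp only [mem_filter, mem_univ, true_and, Fin.forall_fin_succ, IsEmpty.forall_iff]
        exact fun ⟨⟨hx, hy⟩, hx', hy'⟩ => ⟨hkill Φ hx' hy', hx, hy, trivial⟩
    _ = (Nat.card K ^ n) ^ m := card_filter_mulVec_eq_zero_mul_pow hli

theorem sum_natCard_ker_mulVecLin_mul_pow_le :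
    (∑ Φ : Matrix (Fin m) (Fin n) K, Nat.card (LinearMap.ker Φ.mulVecLin)) * Nat.card K ^ m
      ≤ (Nat.card K ^ n) ^ m * (Nat.card K ^ m + Nat.card K ^ n) := by
  have hker (Φ : Matrix (Fin m) (Fin n) K) :
      Nat.card (LinearMap.ker Φ.mulVecLin) = #{w | Φ *ᵥ w = 0} := by
    rw [← Fintype.card_subtype, ← Nat.card_eq_fintype_card]
    rfl
  have hnonzero (w : Fin n → K) (hw : w ≠ 0) :
      #{Φ : Matrix (Fin m) (Fin n) K | Φ *ᵥ w = 0} * Nat.card K ^ m = (Nat.card K ^ n) ^ m := by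
    simpa using card_filter_mulVec_eq_zero_mul_pow (m := m)
      (linearIndependent_unique_iff.mpr (by simpa using hw) : LinearIndependent K ![w])
  have hcard : Fintype.card (Matrix (Fin m) (Fin n) K) = (Nat.card K ^ n) ^ m := by
    rw [← Nat.card_eq_fintype_card]
    simp [Matrix]
  calc (∑ Φ : Matrix (Fin m) (Fin n) K, Nat.card (LinearMap.ker Φ.mulVecLin)) * Nat.card K ^ m
      = ∑ w : Fin n → K, #{Φ : Matrix (Fin m) (Fin n) K | Φ *ᵥ w = 0} * Nat.card K ^ m := by
        simp_rw [hker, ← sum_mul]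
        rw [sum_card_filter_comm]
    _ = #{Φ : Matrix (Fin m) (Fin n) K | Φ *ᵥ 0 = 0} * Nat.card K ^ m +
        ∑ w ∈ {0}ᶜ, #{Φ : Matrix (Fin m) (Fin n) K | Φ *ᵥ w = 0} * Nat.card K ^ m :=
        Fintype.sum_eq_add_sum_compl 0 _
    _ ≤ (Nat.card K ^ n) ^ m * Nat.card K ^ m + ∑ _w : Fin n → K, (Nat.card K ^ n) ^ m := by
        gcongr
        · simp [hcard]
        · rw [sum_congr rfl fun w hw => hnonzero w (by simpa using hw)]
          exact sum_le_univ_sum_of_nonneg (by simp)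
    _ = (Nat.card K ^ n) ^ m * (Nat.card K ^ m + Nat.card K ^ n) := by
        simp only [Nat.card_eq_fintype_card, sum_const, card_univ, Fintype.card_pi, prod_const,
          Fintype.card_fin, smul_eq_mul]
        ring

end MatrixCount

def MultiSumFreeBound (p : ℕ) (c : ℝ) : Prop :=
  ∀ d T : ℕ, ∀ a b e : Fin T → (Fin d → ZMod p),
    (∀ i j k, a i + b j + e k = 0 ↔ (i = j ∧ j = k)) → (T : ℝ) ≤ (p : ℝ) ^ ((1 - c) * (d : ℝ))

theorem MultiSumFreeBound.card_le {p : ℕ} [Fact p.Prime] {c : ℝ} (h : MultiSumFreeBound p c)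
    {W : Type*} [AddCommGroup W] [Module (ZMod p) W] [Finite W] {ι : Type*} [Fintype ι]
    (a b e : ι → W) (habe : ∀ i j k, a i + b j + e k = 0 ↔ (i = j ∧ j = k)) :
    (Fintype.card ι : ℝ) ≤ (Nat.card W : ℝ) ^ (1 - c) := by
  have : Module.Finite (ZMod p) W := Module.Finite.of_finite
  let φ := (Module.finBasis (ZMod p) W).equivFun
  let σ := (Fintype.equivFin ι).symm
  have hbound := h _ _ (φ ∘ a ∘ σ) (φ ∘ b ∘ σ) (φ ∘ e ∘ σ) fun i j k => by
    simp only [Function.comp_apply, ← map_add, φ.map_eq_zero_iff, habe, σ.injective.eq_iff]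
  rw [Module.natCard_eq_pow_finrank (K := ZMod p), Nat.card_zmod, Nat.cast_pow,
    ← Real.rpow_natCast_mul (Nat.cast_nonneg p), mul_comm]
  exact hbound

section VertexSharing

variable {α : Type*} [DecidableEq α]

def SharesVertex (t t' : α × α × α) : Prop :=
  t.1 = t'.1 ∨ t.2.1 = t'.2.1 ∨ t.2.2 = t'.2.2

instance : DecidableRel (SharesVertex (α := α)) :=
  fun _ _ => inferInstanceAs (Decidable (_ ∨ _ ∨ _))

def isolated (S : Finset (α × α × α)) : Finset (α × α × α) :=
  {t ∈ S | ∀ t' ∈ S, SharesVertex t t' → t' = t}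

def sharingPairs (S : Finset (α × α × α)) : Finset ((α × α × α) × (α × α × α)) :=
  {q ∈ S ×ˢ S | q.1 ≠ q.2 ∧ SharesVertex q.1 q.2}

theorem card_le_card_isolated_add_card_sharingPairs (S : Finset (α × α × α)) :
    #S ≤ #(isolated S) + #(sharingPairs S) := by
  have hcover : S ⊆ isolated S ∪ (sharingPairs S).image Prod.fst := by
    intro t ht
    by_cases h : ∀ t' ∈ S, SharesVertex t t' → t' = t
    · exact mem_union_left _ (mem_filter.mpr ⟨ht, h⟩)
    · push Not at h
      obtain ⟨t', ht', hshare, hne⟩ := h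
      exact mem_union_right _ (mem_image.mpr
        ⟨(t, t'), mem_filter.mpr ⟨mem_product.mpr ⟨ht, ht'⟩, hne.symm, hshare⟩, rfl⟩)
  exact (card_le_card hcover).trans ((card_union_le _ _).trans (by gcongr; exact card_image_le))

theorem sharingPairs_filter (S : Finset (α × α × α)) (P : α × α × α → Prop) [DecidablePred P] :
    sharingPairs {t ∈ S | P t} = {q ∈ sharingPairs S | P q.1 ∧ P q.2} := by
  ext q
  simp only [sharingPairs, mem_filter, mem_product]
  tauto

theorem card_sharingPairs_le (S : Finset (α × α × α)) {r : ℝ}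
    (h₁ : ∀ t ∈ S, (#{t' ∈ S | t'.1 = t.1} : ℝ) ≤ r)
    (h₂ : ∀ t ∈ S, (#{t' ∈ S | t'.2.1 = t.2.1} : ℝ) ≤ r)
    (h₃ : ∀ t ∈ S, (#{t' ∈ S | t'.2.2 = t.2.2} : ℝ) ≤ r) :
    (#(sharingPairs S) : ℝ) ≤ 3 * r * #S := by
  have hfiber (f : α × α × α → α) (hf : ∀ t ∈ S, (#{t' ∈ S | f t' = f t} : ℝ) ≤ r) :
      (#{q ∈ S ×ˢ S | f q.1 = f q.2} : ℝ) ≤ r * #S := by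
    have hsum : #{q ∈ S ×ˢ S | f q.1 = f q.2} = ∑ t ∈ S, #{t' ∈ S | f t' = f t} := by
      simp_rw [card_filter, sum_product, eq_comm]
    rw [hsum, Nat.cast_sum]
    calc _ ≤ ∑ _t ∈ S, r := sum_le_sum hf
      _ = r * #S := by rw [sum_const, nsmul_eq_mul, mul_comm]
  have hcover : sharingPairs S ⊆ {q ∈ S ×ˢ S | q.1.1 = q.2.1} ∪
      {q ∈ S ×ˢ S | q.1.2.1 = q.2.2.1} ∪ {q ∈ S ×ˢ S | q.1.2.2 = q.2.2.2} := by
    intro q hq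
    rw [sharingPairs, mem_filter, SharesVertex] at hq
    simp only [mem_filter, mem_union]
    tauto
  have hcard := (card_le_card hcover).trans
    ((card_union_le _ _).trans (add_le_add_left (card_union_le _ _) _))
  calc (#(sharingPairs S) : ℝ)
      ≤ #{q ∈ S ×ˢ S | q.1.1 = q.2.1} + #{q ∈ S ×ˢ S | q.1.2.1 = q.2.2.1} +
          #{q ∈ S ×ˢ S | q.1.2.2 = q.2.2.2} := by exact_mod_cast hcard
    _ ≤ r * #S + r * #S + r * #S := by
        gcongr
        exacts [hfiber (·.1) h₁, hfiber (·.2.1) h₂, hfiber (·.2.2) h₃]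
    _ = 3 * r * #S := by ring

end VertexSharing

section TriangleCounting

variable {V : Type*} [AddCommGroup V] [DecidableEq V]

def triangles (X Y Z : Finset V) : Finset (V × V × V) :=
  {t ∈ X ×ˢ Y ×ˢ Z | t.1 + t.2.1 + t.2.2 = 0}

theorem mem_triangles {X Y Z : Finset V} {t : V × V × V} :
    t ∈ triangles X Y Z ↔ (t.1 ∈ X ∧ t.2.1 ∈ Y ∧ t.2.2 ∈ Z) ∧ t.1 + t.2.1 + t.2.2 = 0 := by
  simp [triangles]

theorem card_triangles_filter_fst_le (X Y Z : Finset V) (x : V) :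
    #{t ∈ triangles X Y Z | t.1 = x} ≤ #{s ∈ Y ×ˢ Z | x + s.1 + s.2 = 0} :=
  card_le_card_of_injOn (·.2)
    (fun t ht => by
      obtain ⟨htri, rfl⟩ := mem_filter.mp ht
      obtain ⟨⟨-, hy, hz⟩, hsum⟩ := mem_triangles.mp htri
      exact mem_filter.mpr ⟨mem_product.mpr ⟨hy, hz⟩, hsum⟩)
    (fun t ht t' ht' h => Prod.ext ((mem_filter.mp ht).2.trans (mem_filter.mp ht').2.symm) h)

theorem card_triangles_filter_snd_le (X Y Z : Finset V) (y : V) :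
    #{t ∈ triangles X Y Z | t.2.1 = y} ≤ #{s ∈ X ×ˢ Z | s.1 + y + s.2 = 0} :=
  card_le_card_of_injOn (fun t => (t.1, t.2.2))
    (fun t ht => by
      obtain ⟨htri, rfl⟩ := mem_filter.mp ht
      obtain ⟨⟨hx, -, hz⟩, hsum⟩ := mem_triangles.mp htri
      exact mem_filter.mpr ⟨mem_product.mpr ⟨hx, hz⟩, hsum⟩)
    (fun t ht t' ht' h => Prod.ext (Prod.ext_iff.mp h).1
      (Prod.ext ((mem_filter.mp ht).2.trans (mem_filter.mp ht').2.symm) (Prod.ext_iff.mp h).2))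

theorem card_triangles_filter_thd_le (X Y Z : Finset V) (z : V) :
    #{t ∈ triangles X Y Z | t.2.2 = z} ≤ #{s ∈ X ×ˢ Y | s.1 + s.2 + z = 0} :=
  card_le_card_of_injOn (fun t => (t.1, t.2.1))
    (fun t ht => by
      obtain ⟨htri, rfl⟩ := mem_filter.mp ht
      obtain ⟨⟨hx, hy, -⟩, hsum⟩ := mem_triangles.mp htri
      exact mem_filter.mpr ⟨mem_product.mpr ⟨hx, hy⟩, hsum⟩)
    (fun t ht t' ht' h => Prod.ext (Prod.ext_iff.mp h).1
      (Prod.ext (Prod.ext_iff.mp h).2 ((mem_filter.mp ht).2.trans (mem_filter.mp ht').2.symm)))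

theorem card_sharingPairs_triangles_le {X Y Z : Finset V} {r : ℝ}
    (hX : ∀ x ∈ X, (#{s ∈ Y ×ˢ Z | x + s.1 + s.2 = 0} : ℝ) ≤ r)
    (hY : ∀ y ∈ Y, (#{s ∈ X ×ˢ Z | s.1 + y + s.2 = 0} : ℝ) ≤ r)
    (hZ : ∀ z ∈ Z, (#{s ∈ X ×ˢ Y | s.1 + s.2 + z = 0} : ℝ) ≤ r) :
    (#(sharingPairs (triangles X Y Z)) : ℝ) ≤ 3 * r * #(triangles X Y Z) :=
  card_sharingPairs_le _
    (fun t ht => (Nat.cast_le.mpr (card_triangles_filter_fst_le X Y Z t.1)).trans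
      (hX _ (mem_triangles.mp ht).1.1))
    (fun t ht => (Nat.cast_le.mpr (card_triangles_filter_snd_le X Y Z t.2.1)).trans
      (hY _ (mem_triangles.mp ht).1.2.1))
    (fun t ht => (Nat.cast_le.mpr (card_triangles_filter_thd_le X Y Z t.2.2)).trans
      (hZ _ (mem_triangles.mp ht).1.2.2))

section Module

variable {R : Type*} [Ring R] [Module R V] {X Y Z : Finset V}

theorem linearIndependent_of_mem_triangles (hXY : Disjoint X Y)
    (hind : ∀ u ∈ X ∪ Y ∪ Z, ∀ v ∈ X ∪ Y ∪ Z, u ≠ v →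
      ∀ a b : R, a • u + b • v = 0 → a = 0 ∧ b = 0)
    {t : V × V × V} (ht : t ∈ triangles X Y Z) : LinearIndependent R ![t.1, t.2.1] := by
  obtain ⟨⟨hx, hy, -⟩, -⟩ := mem_triangles.mp ht
  exact LinearIndependent.pair_iff.mpr (hind _ (by simp [hx]) _ (by simp [hy])
    fun h => disjoint_left.mp hXY hx (h ▸ hy))

theorem eq_of_mem_span_of_mem_triangles [Nontrivial R] [StrongRankCondition R]
    (hli : ∀ t ∈ triangles X Y Z, LinearIndependent R ![t.1, t.2.1])
    (hplane : ∀ U : Submodule R V, Module.finrank R U = 2 →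
      ∀ x ∈ X, ∀ y ∈ Y, ∀ z ∈ Z, x + y + z = 0 → x ∈ U → y ∈ U → z ∈ U →
      ∀ x' ∈ X, ∀ y' ∈ Y, ∀ z' ∈ Z, x' + y' + z' = 0 → x' ∈ U → y' ∈ U → z' ∈ U →
        x = x' ∧ y = y' ∧ z = z')
    {t t' : V × V × V} (ht : t ∈ triangles X Y Z) (ht' : t' ∈ triangles X Y Z)
    (hx' : t'.1 ∈ Submodule.span R (Set.range ![t.1, t.2.1]))
    (hy' : t'.2.1 ∈ Submodule.span R (Set.range ![t.1, t.2.1])) : t' = t := by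
  set U := Submodule.span R (Set.range ![t.1, t.2.1])
  have hU : Module.finrank R U = 2 := by rw [finrank_span_eq_card (hli t ht), Fintype.card_fin]
  have hx : t.1 ∈ U := Submodule.subset_span ⟨0, rfl⟩
  have hy : t.2.1 ∈ U := Submodule.subset_span ⟨1, rfl⟩
  have hthird {s : V × V × V} (hs : s ∈ triangles X Y Z) (h₁ : s.1 ∈ U) (h₂ : s.2.1 ∈ U) :
      s.2.2 ∈ U := by
    rw [eq_neg_of_add_eq_zero_right (mem_triangles.mp hs).2]
    exact U.neg_mem (U.add_mem h₁ h₂)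
  obtain ⟨⟨htx, hty, htz⟩, hts⟩ := mem_triangles.mp ht
  obtain ⟨⟨htx', hty', htz'⟩, hts'⟩ := mem_triangles.mp ht'
  obtain ⟨h₁, h₂, h₃⟩ := hplane U hU _ htx _ hty _ htz hts hx hy (hthird ht hx hy)
    _ htx' _ hty' _ htz' hts' hx' hy' (hthird ht' hx' hy')
  exact Prod.ext h₁.symm (Prod.ext h₂.symm h₃.symm)

end Module

theorem MultiSumFreeBound.card_isolated_le {p : ℕ} [Fact p.Prime] {c : ℝ}
    (h : MultiSumFreeBound p c) [Module (ZMod p) V] {W : Type*} [AddCommGroup W]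
    [Module (ZMod p) W] [DecidableEq W] (f : V →ₗ[ZMod p] W) [Finite (LinearMap.ker f)]
    (X Y Z : Finset V) :
    (#(isolated {t ∈ triangles X Y Z | f t.1 = 0 ∧ f t.2.1 = 0}) : ℝ)
      ≤ (Nat.card (LinearMap.ker f) : ℝ) ^ (1 - c) := by
  set A := {t ∈ triangles X Y Z | f t.1 = 0 ∧ f t.2.1 = 0}
  have hA {t} : t ∈ A ↔ t ∈ triangles X Y Z ∧ f t.1 = 0 ∧ f t.2.1 = 0 := mem_filter
  have hG {t} : t ∈ isolated A ↔ t ∈ A ∧ ∀ t' ∈ A, SharesVertex t t' → t' = t := mem_filter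
  have hker (t) (ht : t ∈ isolated A) : t.1 ∈ LinearMap.ker f ∧ t.2.1 ∈ LinearMap.ker f ∧
      t.2.2 ∈ LinearMap.ker f := by
    obtain ⟨htri, hx, hy⟩ := hA.mp (hG.mp ht).1
    have hz : t.2.2 = -(t.1 + t.2.1) := eq_neg_of_add_eq_zero_right (mem_triangles.mp htri).2
    simp [hx, hy, hz]
  have hbound := h.card_le (W := LinearMap.ker f) (ι := isolated A)
    (fun t => ⟨t.1.1, (hker t.1 t.2).1⟩) (fun t => ⟨t.1.2.1, (hker t.1 t.2).2.1⟩)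
    (fun t => ⟨t.1.2.2, (hker t.1 t.2).2.2⟩) fun i j k => by
      refine ⟨fun hsum => ?_, ?_⟩
      · replace hsum : i.1.1 + j.1.2.1 + k.1.2.2 = 0 := congrArg Subtype.val hsum
        set s : V × V × V := (i.1.1, j.1.2.1, k.1.2.2)
        obtain ⟨hiA, hi'⟩ := hG.mp i.2
        obtain ⟨hjA, hj'⟩ := hG.mp j.2
        obtain ⟨hkA, hk'⟩ := hG.mp k.2
        obtain ⟨hi, hxi, -⟩ := hA.mp hiA
        obtain ⟨hj, -, hyj⟩ := hA.mp hjA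
        obtain ⟨hk, -⟩ := hA.mp hkA
        have hs : s ∈ A := hA.mpr ⟨mem_triangles.mpr ⟨⟨(mem_triangles.mp hi).1.1,
          (mem_triangles.mp hj).1.2.1, (mem_triangles.mp hk).1.2.2⟩, hsum⟩, hxi, hyj⟩
        have hsi : s = i := hi' s hs (Or.inl rfl)
        have hsj : s = j := hj' s hs (Or.inr (Or.inl rfl))
        have hsk : s = k := hk' s hs (Or.inr (Or.inr rfl))
        exact ⟨Subtype.ext (hsi.symm.trans hsj), Subtype.ext (hsj.symm.trans hsk)⟩
      · rintro ⟨rfl, rfl⟩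
        exact Subtype.ext (mem_triangles.mp (hA.mp (hG.mp i.2).1).1).2
  simpa using hbound

end TriangleCounting

section Averaging

variable {K : Type*} [Field K] [Fintype K] [DecidableEq K] {m n : ℕ}

theorem sum_card_filter_mulVec_eq_zero_mul_pow
    (T : Finset ((Fin n → K) × (Fin n → K) × (Fin n → K)))
    (hli : ∀ t ∈ T, LinearIndependent K ![t.1, t.2.1]) :
    (∑ Φ : Matrix (Fin m) (Fin n) K, #{t ∈ T | Φ *ᵥ t.1 = 0 ∧ Φ *ᵥ t.2.1 = 0}) *
      (Nat.card K ^ 2) ^ m = #T * (Nat.card K ^ n) ^ m := by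
  rw [sum_card_filter_comm, sum_mul,
    sum_congr rfl fun t ht => card_filter_mulVec_pair_eq_zero_mul_pow (hli t ht), sum_const,
    smul_eq_mul]

theorem sum_card_sharingPairs_filter_mulVec_eq_zero_mul_pow_le
    (T : Finset ((Fin n → K) × (Fin n → K) × (Fin n → K)))
    (hli : ∀ t ∈ T, LinearIndependent K ![t.1, t.2.1])
    (hplane : ∀ t ∈ T, ∀ t' ∈ T, t'.1 ∈ Submodule.span K (Set.range ![t.1, t.2.1]) →
      t'.2.1 ∈ Submodule.span K (Set.range ![t.1, t.2.1]) → t' = t) :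
    (∑ Φ : Matrix (Fin m) (Fin n) K,
        #(sharingPairs {t ∈ T | Φ *ᵥ t.1 = 0 ∧ Φ *ᵥ t.2.1 = 0})) * (Nat.card K ^ 3) ^ m
      ≤ #(sharingPairs T) * (Nat.card K ^ n) ^ m := by
  simp_rw [sharingPairs_filter]
  rw [sum_card_filter_comm, sum_mul]
  calc _ ≤ ∑ _q ∈ sharingPairs T, (Nat.card K ^ n) ^ m := sum_le_sum fun q hq => by
        obtain ⟨hqT, hne, -⟩ := mem_filter.mp hq
        obtain ⟨ht, ht'⟩ := mem_product.mp hqT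
        exact card_filter_mulVec_two_pairs_eq_zero_mul_pow_le (hli _ ht)
          fun ⟨hx', hy'⟩ => hne (hplane _ ht _ ht' hx' hy').symm
    _ = #(sharingPairs T) * (Nat.card K ^ n) ^ m := by rw [sum_const, smul_eq_mul]

end Averaging

theorem Real.rpow_one_sub_le_rpow_neg_mul {s D c : ℝ} (hD : 0 < D) (hDs : D ≤ s) (hc : 0 ≤ c) :
    s ^ (1 - c) ≤ D ^ (-c) * s := by
  have hs : 0 < s := hD.trans_le hDs
  rw [sub_eq_add_neg, Real.rpow_add hs, Real.rpow_one, mul_comm]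
  exact mul_le_mul_of_nonneg_right (Real.rpow_le_rpow_of_nonpos hD hDs (by linarith)) hs.le

/-- `SA`, `SG`, `SB` are the totals over all `μ` matrices `Φ` of the numbers of triangles,
isolated triangles and vertex-sharing pairs of triangles in `ker Φ`; `M = p^m`, `D = p^d`. -/
theorem le_of_averaged_counts {a SA SG SB μ M N D E ρ : ℝ} (ha : 0 ≤ a) (hM : 0 < M)
    (hμ : 0 < μ) (hE : 0 ≤ E) (hN : N = D * M) (hD : 8 ≤ D) (hρ : ρ * D ≤ 1 / 5)
    (hsplit : SA ≤ SG + SB) (hA : SA * M ^ 2 = a * μ) (hB : SB * M ^ 3 ≤ 3 * (ρ * N) * a * μ)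
    (hG : SG * M ≤ E * (μ * (M + N))) :
    a ≤ 45 / 16 * (E * D) * M ^ 2 := by
  subst hN
  have hcount : a * μ * M ≤ E * μ * M ^ 3 * (1 + D) + 3 * (ρ * D) * (a * μ * M) :=
    calc a * μ * M = SA * M ^ 3 := by rw [← hA]; ring
      _ ≤ (SG + SB) * M ^ 3 := by gcongr
      _ = SG * M * M ^ 2 + SB * M ^ 3 := by ring
      _ ≤ E * (μ * (M + D * M)) * M ^ 2 + 3 * (ρ * (D * M)) * a * μ := by gcongr
      _ = E * μ * M ^ 3 * (1 + D) + 3 * (ρ * D) * (a * μ * M) := by ring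
  have hsmall : 3 * (ρ * D) * (a * μ * M) ≤ 3 / 5 * (a * μ * M) := by gcongr; linarith
  have hscaled : a * (μ * M) ≤ 5 / 2 * E * M ^ 2 * (1 + D) * (μ * M) := by linarith
  calc a ≤ 5 / 2 * E * M ^ 2 * (1 + D) := le_of_mul_le_mul_right hscaled (by positivity)
    _ ≤ 5 / 2 * E * M ^ 2 * (9 / 8 * D) := by gcongr; linarith
    _ = 45 / 16 * (E * D) * M ^ 2 := by ring

section SumFree

variable {p : ℕ} [hp : Fact p.Prime] {c : ℝ} {n : ℕ}

theorem MultiSumFreeBound.sum_card_isolated_mul_pow_le (hsf : MultiSumFreeBound p c) (hc : 0 ≤ c)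
    (X Y Z : Finset (Fin n → ZMod p)) {d m : ℕ} (hn : n = d + m) :
    (∑ Φ : Matrix (Fin m) (Fin n) (ZMod p),
        (#(isolated {t ∈ triangles X Y Z | Φ *ᵥ t.1 = 0 ∧ Φ *ᵥ t.2.1 = 0}) : ℝ)) * (p : ℝ) ^ m
      ≤ ((p : ℝ) ^ d) ^ (-c) * (((p : ℝ) ^ n) ^ m * ((p : ℝ) ^ m + (p : ℝ) ^ n)) := by
  have hD : (0 : ℝ) < (p : ℝ) ^ d := pow_pos (Nat.cast_pos.mpr hp.out.pos) d
  have hterm (Φ : Matrix (Fin m) (Fin n) (ZMod p)) :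
      (#(isolated {t ∈ triangles X Y Z | Φ *ᵥ t.1 = 0 ∧ Φ *ᵥ t.2.1 = 0}) : ℝ)
        ≤ ((p : ℝ) ^ d) ^ (-c) * Nat.card (LinearMap.ker Φ.mulVecLin) := by
    have hkerD : (p : ℝ) ^ d ≤ Nat.card (LinearMap.ker Φ.mulVecLin) := by
      have hker := pow_le_pow_mul_natCard_ker_mulVecLin Φ
      rw [Nat.card_zmod, show p ^ n = p ^ m * p ^ d by rw [hn, pow_add, mul_comm]] at hker
      exact_mod_cast Nat.le_of_mul_le_mul_left hker (pow_pos hp.out.pos m)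
    exact (hsf.card_isolated_le Φ.mulVecLin X Y Z).trans
      (Real.rpow_one_sub_le_rpow_neg_mul hD hkerD hc)
  have hkernels := sum_natCard_ker_mulVecLin_mul_pow_le (K := ZMod p) (m := m) (n := n)
  rw [Nat.card_zmod] at hkernels
  calc _ ≤ (∑ Φ : Matrix (Fin m) (Fin n) (ZMod p),
          ((p : ℝ) ^ d) ^ (-c) * Nat.card (LinearMap.ker Φ.mulVecLin)) * (p : ℝ) ^ m := by
        gcongr with Φ
        exact hterm Φ
    _ = ((p : ℝ) ^ d) ^ (-c) * (((∑ Φ : Matrix (Fin m) (Fin n) (ZMod p),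
          Nat.card (LinearMap.ker Φ.mulVecLin)) * p ^ m : ℕ) : ℝ) := by
        rw [← mul_sum]
        push_cast
        ring
    _ ≤ _ := by
        gcongr
        exact_mod_cast hkernels

theorem MultiSumFreeBound.card_triangles_le (hsf : MultiSumFreeBound p c) (hc : 0 ≤ c)
    (X Y Z : Finset (Fin n → ZMod p)) {d m : ℕ} (hn : n = d + m) {ρ : ℝ}
    (hli : ∀ t ∈ triangles X Y Z, LinearIndependent (ZMod p) ![t.1, t.2.1])
    (hplane : ∀ t ∈ triangles X Y Z, ∀ t' ∈ triangles X Y Z,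
      t'.1 ∈ Submodule.span (ZMod p) (Set.range ![t.1, t.2.1]) →
      t'.2.1 ∈ Submodule.span (ZMod p) (Set.range ![t.1, t.2.1]) → t' = t)
    (hpairs : (#(sharingPairs (triangles X Y Z)) : ℝ)
      ≤ 3 * (ρ * (p : ℝ) ^ n) * #(triangles X Y Z))
    (hρ : ρ * (p : ℝ) ^ d ≤ 1 / 5) (hd : 8 ≤ (p : ℝ) ^ d) :
    (#(triangles X Y Z) : ℝ) ≤ 45 / 16 * ((p : ℝ) ^ d) ^ (1 - c) * ((p : ℝ) ^ m) ^ 2 := by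
  have hp₀ : (0 : ℝ) < p := Nat.cast_pos.mpr hp.out.pos
  have hN : (p : ℝ) ^ n = (p : ℝ) ^ d * (p : ℝ) ^ m := by rw [hn, pow_add]
  have hsplit := sum_le_sum fun (Φ : Matrix (Fin m) (Fin n) (ZMod p)) (_ : Φ ∈ univ) =>
    card_le_card_isolated_add_card_sharingPairs
      {t ∈ triangles X Y Z | Φ *ᵥ t.1 = 0 ∧ Φ *ᵥ t.2.1 = 0}
  rw [sum_add_distrib] at hsplit
  have hA := sum_card_filter_mulVec_eq_zero_mul_pow (m := m) (triangles X Y Z) hli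
  have hB := sum_card_sharingPairs_filter_mulVec_eq_zero_mul_pow_le (m := m) (triangles X Y Z)
    hli hplane
  rw [Nat.card_zmod, pow_right_comm] at hA hB
  rify at hsplit hA hB
  have hG := hsf.sum_card_isolated_mul_pow_le hc X Y Z hn
  rw [sub_eq_neg_add, Real.rpow_add (pow_pos hp₀ d), Real.rpow_one]
  exact le_of_averaged_counts (Nat.cast_nonneg _) (pow_pos hp₀ m) (pow_pos (pow_pos hp₀ n) m)
    (Real.rpow_nonneg (pow_pos hp₀ d).le _) hN hd hρ hsplit hA (hB.trans (by gcongr)) hG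

end SumFree

theorem exists_pow_window {P ρ : ℝ} (hP : 1 < P) (hρ₀ : 0 < ρ) (hρ : ρ * (5 * P ^ 3) ≤ 1) {n : ℕ}
    (hn : 1 ≤ ρ * P ^ n) : ∃ d, 3 ≤ d ∧ d ≤ n ∧ ρ * P ^ d ≤ 1 / 5 ∧ 1 < 5 * P * ρ * P ^ d := by
  have hP3 : 1 ≤ P ^ 3 := one_le_pow₀ hP.le
  obtain ⟨d, hle, hlt⟩ := exists_nat_pow_near (x := 1 / (5 * ρ)) (y := P)
    (by rw [le_div_iff₀ (by positivity)]; nlinarith) hP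
  rw [le_div_iff₀ (by positivity)] at hle
  rw [div_lt_iff₀ (by positivity), pow_succ] at hlt
  have hwin : ρ * P ^ d ≤ 1 / 5 := by linarith
  refine ⟨d, ?_, ?_, hwin, by linarith⟩
  · by_contra! hd
    have : P ^ (d + 1) ≤ P ^ 3 := pow_le_pow_right₀ hP.le hd
    rw [pow_succ] at this
    nlinarith
  · by_contra! hd
    have : P ^ n ≤ P ^ d := pow_le_pow_right₀ hP.le hd.le
    nlinarith

theorem le_of_mul_sq_le_rpow {δ D M P ρ c : ℝ} (hM : 0 < M) (hD : 0 < D) (hP : 1 ≤ P)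
    (hρ : 0 < ρ) (hc₀ : 0 ≤ c) (hc₁ : c ≤ 1) (hwin : 1 < 5 * P * ρ * D)
    (h : δ * (D * M) ^ 2 ≤ 45 / 16 * D ^ (1 - c) * M ^ 2) :
    δ ≤ 125 * P ^ 2 * ρ ^ (1 + c) := by
  have hsplit : D ^ (1 - c) = D⁻¹ ^ (1 + c) * D ^ 2 := by
    rw [Real.inv_rpow hD.le, ← Real.rpow_neg hD.le, ← Real.rpow_two, ← Real.rpow_add hD]
    ring_nf
  have hδ : δ ≤ 45 / 16 * D⁻¹ ^ (1 + c) := by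
    refine le_of_mul_le_mul_right ?_ (by positivity : 0 < (D * M) ^ 2)
    calc δ * (D * M) ^ 2 ≤ 45 / 16 * D ^ (1 - c) * M ^ 2 := h
      _ = 45 / 16 * D⁻¹ ^ (1 + c) * (D * M) ^ 2 := by rw [hsplit]; ring
  have hinv : D⁻¹ ≤ 5 * P * ρ := by
    rw [inv_le_iff_one_le_mul₀ hD]
    linarith
  have h5P : (5 * P) ^ (1 + c) ≤ 25 * P ^ 2 := by
    calc (5 * P) ^ (1 + c) ≤ (5 * P) ^ (2 : ℝ) :=
          Real.rpow_le_rpow_of_exponent_le (by linarith) (by linarith)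
      _ = 25 * P ^ 2 := by rw [Real.rpow_two]; ring
  have hρc : 0 ≤ ρ ^ (1 + c) := Real.rpow_nonneg hρ.le _
  calc δ ≤ 45 / 16 * D⁻¹ ^ (1 + c) := hδ
    _ ≤ 45 / 16 * (5 * P * ρ) ^ (1 + c) := by gcongr
    _ = 45 / 16 * ((5 * P) ^ (1 + c) * ρ ^ (1 + c)) := by
        rw [Real.mul_rpow (by positivity) hρ.le]
    _ ≤ 45 / 16 * (25 * P ^ 2 * ρ ^ (1 + c)) := by gcongr
    _ ≤ 125 * P ^ 2 * ρ ^ (1 + c) := by nlinarith [sq_nonneg P]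

theorem stmt_13_general (p n : ℕ) [Fact p.Prime] (c ρ δ : ℝ)
    (hc0 : 0 < c) (hc1 : c < 1)
    (hsf : ∀ d T : ℕ, ∀ a b e : Fin T → (Fin d → ZMod p),
      (∀ i j k, a i + b j + e k = 0 ↔ (i = j ∧ j = k)) →
      (T : ℝ) ≤ (p : ℝ) ^ ((1 - c) * (d : ℝ)))
    (hρ0 : 0 < ρ) (hρ : ρ ≤ 1 / (5 * (p : ℝ) ^ 3))
    (X Y Z : Finset (Fin n → ZMod p))
    (hXY : Disjoint X Y)
    (hind : ∀ u ∈ X ∪ Y ∪ Z, ∀ v ∈ X ∪ Y ∪ Z, u ≠ v →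
      ∀ a b : ZMod p, a • u + b • v = 0 → a = 0 ∧ b = 0)
    (hplane : ∀ U : Submodule (ZMod p) (Fin n → ZMod p),
      Module.finrank (ZMod p) U = 2 →
      ∀ x ∈ X, ∀ y ∈ Y, ∀ z ∈ Z, x + y + z = 0 → x ∈ U → y ∈ U → z ∈ U →
      ∀ x' ∈ X, ∀ y' ∈ Y, ∀ z' ∈ Z, x' + y' + z' = 0 → x' ∈ U → y' ∈ U → z' ∈ U →
        x = x' ∧ y = y' ∧ z = z')
    (hdegX : ∀ x ∈ X,
      ((Finset.filter (fun t => x + t.1 + t.2 = 0) (Y ×ˢ Z)).card : ℝ) ≤ ρ * (p : ℝ) ^ n)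
    (hdegY : ∀ y ∈ Y,
      ((Finset.filter (fun t => t.1 + y + t.2 = 0) (X ×ˢ Z)).card : ℝ) ≤ ρ * (p : ℝ) ^ n)
    (hdegZ : ∀ z ∈ Z,
      ((Finset.filter (fun t => t.1 + t.2 + z = 0) (X ×ˢ Y)).card : ℝ) ≤ ρ * (p : ℝ) ^ n)
    (hδ : ((Finset.filter (fun t => t.1 + t.2.1 + t.2.2 = 0) (X ×ˢ Y ×ˢ Z)).card : ℝ)
        = δ * ((p : ℝ) ^ n) ^ 2) :
    δ ≤ 125 * (p : ℝ) ^ 2 * ρ ^ ((1 : ℝ) + c) := by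
  have hp : 2 ≤ p := (Fact.out : p.Prime).two_le
  have hp₁ : (1 : ℝ) < p := by exact_mod_cast hp
  have hT : (#(triangles X Y Z) : ℝ) = δ * ((p : ℝ) ^ n) ^ 2 := hδ
  obtain hempty | ⟨t, ht⟩ := (triangles X Y Z).eq_empty_or_nonempty
  · rw [hempty, card_empty, Nat.cast_zero, eq_comm, mul_eq_zero] at hT
    rw [hT.resolve_right (by positivity)]
    positivity
  have hρN : 1 ≤ ρ * (p : ℝ) ^ n := by
    obtain ⟨⟨hx, hy, hz⟩, hsum⟩ := mem_triangles.mp ht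
    refine le_trans ?_ (hdegX t.1 hx)
    exact_mod_cast card_pos.mpr ⟨t.2, mem_filter.mpr ⟨mem_product.mpr ⟨hy, hz⟩, hsum⟩⟩
  obtain ⟨d, hd₃, hdn, hρd, hwin⟩ :=
    exists_pow_window hp₁ hρ0 ((le_div_iff₀ (by positivity)).mp hρ) hρN
  obtain ⟨m, rfl⟩ := Nat.exists_eq_add_of_le hdn
  have h8 : (8 : ℝ) ≤ (p : ℝ) ^ d :=
    calc (8 : ℝ) = 2 ^ 3 := by norm_num
      _ ≤ (p : ℝ) ^ 3 := pow_le_pow_left₀ (by norm_num) (by exact_mod_cast hp) 3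
      _ ≤ (p : ℝ) ^ d := pow_le_pow_right₀ hp₁.le hd₃
  have hli := fun t (ht : t ∈ triangles X Y Z) => linearIndependent_of_mem_triangles hXY hind ht
  have hcount := MultiSumFreeBound.card_triangles_le hsf hc0.le X Y Z rfl hli
    (fun t ht t' ht' => eq_of_mem_span_of_mem_triangles hli hplane ht ht')
    (card_sharingPairs_triangles_le hdegX hdegY hdegZ) hρd h8
  rw [hT, pow_add] at hcount
  exact le_of_mul_sq_le_rpow (by positivity) (by positivity) hp₁.le hρ0 hc0.le hc1.le hwin hcount

/-- Lemma 2 of the paper: assuming the multicolored sum-free bound with exponent c,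
if every point is in at most ρN triangles (and the independence/unique-plane
conditions hold), then the total number δN² of triangles satisfies
δ ≤ 125 p² ρ^{1+c}. -/
theorem stmt_13 (p n : ℕ) [Fact p.Prime] (c ρ δ : ℝ)
    (hc0 : 0 < c) (hc1 : c < 1)
    (hsf : ∀ d T : ℕ, ∀ a b e : Fin T → (Fin d → ZMod p),
      (∀ i j k, a i + b j + e k = 0 ↔ (i = j ∧ j = k)) →
      (T : ℝ) ≤ (p : ℝ) ^ ((1 - c) * (d : ℝ)))
    (hρ0 : 0 < ρ) (hρ : ρ ≤ 1 / (5 * (p : ℝ) ^ 3))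
    (X Y Z : Finset (Fin n → ZMod p))
    (h0 : (0 : Fin n → ZMod p) ∉ X ∪ Y ∪ Z)
    (hXY : Disjoint X Y) (hXZ : Disjoint X Z) (hYZ : Disjoint Y Z)
    (hind : ∀ u ∈ X ∪ Y ∪ Z, ∀ v ∈ X ∪ Y ∪ Z, u ≠ v →
      ∀ a b : ZMod p, a • u + b • v = 0 → a = 0 ∧ b = 0)
    (hplane : ∀ U : Submodule (ZMod p) (Fin n → ZMod p),
      Module.finrank (ZMod p) U = 2 →
      ∀ x ∈ X, ∀ y ∈ Y, ∀ z ∈ Z, x + y + z = 0 → x ∈ U → y ∈ U → z ∈ U →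
      ∀ x' ∈ X, ∀ y' ∈ Y, ∀ z' ∈ Z, x' + y' + z' = 0 → x' ∈ U → y' ∈ U → z' ∈ U →
        x = x' ∧ y = y' ∧ z = z')
    (hdegX : ∀ x ∈ X,
      ((Finset.filter (fun t => x + t.1 + t.2 = 0) (Y ×ˢ Z)).card : ℝ) ≤ ρ * (p : ℝ) ^ n)
    (hdegY : ∀ y ∈ Y,
      ((Finset.filter (fun t => t.1 + y + t.2 = 0) (X ×ˢ Z)).card : ℝ) ≤ ρ * (p : ℝ) ^ n)
    (hdegZ : ∀ z ∈ Z,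
      ((Finset.filter (fun t => t.1 + t.2 + z = 0) (X ×ˢ Y)).card : ℝ) ≤ ρ * (p : ℝ) ^ n)
    (hδ : ((Finset.filter (fun t => t.1 + t.2.1 + t.2.2 = 0) (X ×ˢ Y ×ˢ Z)).card : ℝ)
        = δ * ((p : ℝ) ^ n) ^ 2) :
    δ ≤ 125 * (p : ℝ) ^ 2 * ρ ^ ((1 : ℝ) + c) :=
  stmt_13_general p n c ρ δ hc0 hc1 hsf hρ0 hρ X Y Z hXY hind hplane hdegX hdegY hdegZ hδ
end

section
/- Self-improvement via tensor powers: Suppose f: (0,1) → (0,∞) is such that for every ε ∈ (0,1), any εN pairwise disjoint triangles in F_p^n (any n, N = p^n) span at least f(ε)N² triangles, and suppose f(ε) ≥ ε^{C+h(ε)} where h(ε) → 0 as ε → 0. If for some X,Y,Z arising from m = εN disjoint triangles the number of triangles is δN² with δ < ε^C, then taking k-fold concatenation powers yields δ^k N^{2k} < (ε^k)^{C} N^{2k} triangles spanned by (εN)^k = ε^k N^k disjoint triangles in F_p^{nk}, contradicting the asymptotic bound for large k. Hence δ ≥ ε^C always. -/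
/-!
Concatenating `k`-tuples of the given disjoint triangles in `F_p^n` yields `(εN)^k = ε^k N^k`
disjoint triangles in `F_p^{nk}`, and the triangles they span are exactly the `k`-tuples of
triangles spanned by the original ones, so there are `T^k` of them if there were `T` before.
Applying the hypothesis to the power and taking `k`-th roots gives `ε^{C + h(ε^k)} N² ≤ T` for
every `k ≥ 1`; letting `k → ∞` makes `h(ε^k) → 0`.
-/

open Finset Filter Topology

section TriangleCount

variable {ι κ V W : Type*} [Fintype ι] [AddZeroClass V] [DecidableEq V]
  [AddZeroClass W] [DecidableEq W]

def triangleCount (x y z : ι → V) : ℕ :=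
  #{tr ∈ univ.image x ×ˢ univ.image y ×ˢ univ.image z | tr.1 + tr.2.1 + tr.2.2 = 0}

theorem triangleCount_comp_equiv [Fintype κ] (σ : κ ≃ ι) (x y z : ι → V) :
    triangleCount (x ∘ σ) (y ∘ σ) (z ∘ σ) = triangleCount x y z := by
  have himage (u : ι → V) : univ.image (u ∘ σ) = univ.image u := by
    ext; simp [σ.surjective.exists]
  simp only [triangleCount, himage]

theorem triangleCount_addEquiv_comp (e : V ≃+ W) (x y z : ι → V) :
    triangleCount (e ∘ x) (e ∘ y) (e ∘ z) = triangleCount x y z := by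
  refine (card_equiv (e.toEquiv.prodCongr (e.toEquiv.prodCongr e.toEquiv)) ?_).symm
  rintro ⟨a, b, c⟩
  simp only [mem_filter, mem_product, ← image_image, Equiv.prodCongr_apply,
    Prod.map, AddEquiv.toEquiv_eq_coe, EquivLike.coe_coe, e.injective.mem_finset_image]
  rw [← map_add, ← map_add, map_eq_zero_iff e e.injective]

theorem triangleCount_pi [Fintype κ] [DecidableEq κ] (x y z : ι → V) :
    triangleCount (fun j : κ → ι => x ∘ j) (fun j => y ∘ j) (fun j => z ∘ j)
      = triangleCount x y z ^ Fintype.card κ := by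
  have himage (u : ι → V) :
      univ.image (fun j : κ → ι => u ∘ j) = Fintype.piFinset fun _ => univ.image u := by
    rw [Fintype.piFinset_image, Fintype.piFinset_univ]; rfl
  let e : (κ → V × V × V) ≃ (κ → V) × (κ → V) × (κ → V) :=
    (Equiv.arrowProdEquivProdArrow _ _ _).trans
      ((Equiv.refl _).prodCongr (Equiv.arrowProdEquivProdArrow _ _ _))
  rw [triangleCount, triangleCount, himage, himage, himage, ← card_univ, ← prod_const,
    ← Fintype.card_piFinset]
  refine (card_equiv e fun g => ?_).symm
  simp [e, Fintype.mem_piFinset, funext_iff, forall_and]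

end TriangleCount

def finConcatAddEquiv (M : Type*) [Add M] (n k : ℕ) : (Fin k → Fin n → M) ≃+ (Fin (n * k) → M) where
  toFun u a := u (finProdFinEquiv.symm a).2 (finProdFinEquiv.symm a).1
  invFun v t s := v (finProdFinEquiv (s, t))
  left_inv u := by simp
  right_inv v := funext fun a => congrArg v (finProdFinEquiv.apply_symm_apply a)
  map_add' _ _ := rfl

section ConcatPower

variable {M : Type*} [AddCommMonoid M] {m n : ℕ}

/-- The vector indexed by `(i₁, …, iₖ)` (through `finFunctionFinEquiv`) is `(x i₁, …, x iₖ)`. -/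
def concatPower (k : ℕ) (x : Fin m → Fin n → M) : Fin (m ^ k) → Fin (n * k) → M :=
  fun j => finConcatAddEquiv M n k (x ∘ finFunctionFinEquiv.symm j)

theorem concatPower_add_add_eq_zero (k : ℕ) {x y z : Fin m → Fin n → M}
    (hxyz : ∀ i, x i + y i + z i = 0) (j : Fin (m ^ k)) :
    concatPower k x j + concatPower k y j + concatPower k z j = 0 := by
  simp only [concatPower, ← map_add, map_eq_zero_iff _ (AddEquiv.injective _)]
  exact funext fun t => hxyz _

theorem concatPower_injective (k : ℕ) {x : Fin m → Fin n → M} (hx : Function.Injective x) :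
    Function.Injective (concatPower k x) :=
  (AddEquiv.injective _).comp <| hx.comp_left.comp finFunctionFinEquiv.symm.injective

theorem triangleCount_concatPower [DecidableEq M] (k : ℕ) (x y z : Fin m → Fin n → M) :
    triangleCount (concatPower k x) (concatPower k y) (concatPower k z)
      = triangleCount x y z ^ k := by
  have := (triangleCount_comp_equiv finFunctionFinEquiv.symm _ _ _).trans <|
    (triangleCount_addEquiv_comp (finConcatAddEquiv M n k) _ _ _).trans <|
      triangleCount_pi (κ := Fin k) x y z
  rwa [Fintype.card_fin] at this

end ConcatPower

theorem tendsto_rpow_add_comp_pow {ε C : ℝ} {h : ℝ → ℝ} (hε : 0 < ε) (hε1 : ε < 1)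
    (hh : Tendsto h (𝓝[>] 0) (𝓝 0)) :
    Tendsto (fun k : ℕ => ε ^ (C + h (ε ^ k))) atTop (𝓝 (ε ^ C)) := by
  have hpow : Tendsto (fun k : ℕ => ε ^ k) atTop (𝓝[>] 0) :=
    tendsto_nhdsWithin_of_tendsto_nhds_of_eventually_within _
      (tendsto_pow_atTop_nhds_zero_of_lt_one hε.le hε1) (.of_forall fun k => pow_pos hε k)
  have hexp : Tendsto (fun k : ℕ => C + h (ε ^ k)) atTop (𝓝 C) := by
    simpa using tendsto_const_nhds.add (hh.comp hpow)
  exact (Real.continuousAt_const_rpow hε.ne').tendsto.comp hexp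

theorem rpow_mul_sq_le_of_pow_le {ε a N T : ℝ} (hε : 0 ≤ ε) (hT : 0 ≤ T) {k : ℕ} (hk : k ≠ 0)
    (h : (ε ^ k) ^ a * (N ^ k) ^ 2 ≤ T ^ k) : ε ^ a * N ^ 2 ≤ T := by
  refine le_of_pow_le_pow_left₀ hk hT ?_
  rwa [mul_pow, Real.rpow_pow_comm hε, pow_right_comm]

theorem stmt_17_general (p : ℕ) (C : ℝ)
    (f h : ℝ → ℝ)
    (hh : Filter.Tendsto h (nhdsWithin 0 (Set.Ioi 0)) (nhds 0))
    (hfh : ∀ ε : ℝ, 0 < ε → ε < 1 → ε ^ (C + h ε) ≤ f ε)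
    (hf : ∀ n : ℕ, ∀ ε : ℝ, 0 < ε → ε < 1 → ∀ m : ℕ, (m : ℝ) = ε * (p : ℝ) ^ n →
      ∀ x y z : Fin m → (Fin n → ZMod p),
        (∀ i, x i + y i + z i = 0) →
        Function.Injective x → Function.Injective y → Function.Injective z →
        f ε * ((p : ℝ) ^ n) ^ 2 ≤
          ((Finset.filter (fun tr => tr.1 + tr.2.1 + tr.2.2 = 0)
            (Finset.univ.image x ×ˢ Finset.univ.image y ×ˢ Finset.univ.image z)).card : ℝ)) :
    ∀ n : ℕ, ∀ ε : ℝ, 0 < ε → ε < 1 → ∀ m : ℕ, (m : ℝ) = ε * (p : ℝ) ^ n →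
      ∀ x y z : Fin m → (Fin n → ZMod p),
        (∀ i, x i + y i + z i = 0) →
        Function.Injective x → Function.Injective y → Function.Injective z →
        ε ^ C * ((p : ℝ) ^ n) ^ 2 ≤
          ((Finset.filter (fun tr => tr.1 + tr.2.1 + tr.2.2 = 0)
            (Finset.univ.image x ×ˢ Finset.univ.image y ×ˢ Finset.univ.image z)).card : ℝ) := by
  intro n ε hε hε1 m hm x y z hxyz hx hy hz
  have key (k : ℕ) (hk : k ≠ 0) :
      ε ^ (C + h (ε ^ k)) * ((p : ℝ) ^ n) ^ 2 ≤ triangleCount x y z := by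
    have hεk : 0 < ε ^ k := pow_pos hε k
    have hεk1 : ε ^ k < 1 := pow_lt_one₀ hε.le hε1 hk
    have hmk : ((m ^ k : ℕ) : ℝ) = ε ^ k * (p : ℝ) ^ (n * k) := by
      push_cast; rw [hm, mul_pow, pow_mul]
    refine rpow_mul_sq_le_of_pow_le hε.le (Nat.cast_nonneg _) hk ?_
    calc (ε ^ k) ^ (C + h (ε ^ k)) * (((p : ℝ) ^ n) ^ k) ^ 2
        ≤ f (ε ^ k) * ((p : ℝ) ^ (n * k)) ^ 2 := by
          rw [← pow_mul (p : ℝ) n k]; gcongr; exact hfh _ hεk hεk1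
      _ ≤ (triangleCount (concatPower k x) (concatPower k y) (concatPower k z) : ℝ) :=
          hf _ _ hεk hεk1 _ hmk _ _ _ (concatPower_add_add_eq_zero k hxyz)
            (concatPower_injective k hx) (concatPower_injective k hy) (concatPower_injective k hz)
      _ = (triangleCount x y z : ℝ) ^ k := by rw [triangleCount_concatPower, Nat.cast_pow]
  exact le_of_tendsto ((tendsto_rpow_add_comp_pow hε hε1 hh).mul_const _)
    (eventually_atTop.2 ⟨1, fun k hk => key k (by omega)⟩)

/-- Self-improvement via tensor powers: if εN disjoint triangles always span at least
f(ε)N² triangles with f(ε) ≥ ε^{C+h(ε)} and h(ε) → 0 as ε → 0, then in fact εN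
disjoint triangles always span at least ε^C N² triangles. -/
theorem stmt_17 (p : ℕ) [Fact p.Prime] (C : ℝ) (hC : 0 < C)
    (f h : ℝ → ℝ)
    (hh : Filter.Tendsto h (nhdsWithin 0 (Set.Ioi 0)) (nhds 0))
    (hfh : ∀ ε : ℝ, 0 < ε → ε < 1 → ε ^ (C + h ε) ≤ f ε)
    (hf : ∀ n : ℕ, ∀ ε : ℝ, 0 < ε → ε < 1 → ∀ m : ℕ, (m : ℝ) = ε * (p : ℝ) ^ n →
      ∀ x y z : Fin m → (Fin n → ZMod p),
        (∀ i, x i + y i + z i = 0) →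
        Function.Injective x → Function.Injective y → Function.Injective z →
        f ε * ((p : ℝ) ^ n) ^ 2 ≤
          ((Finset.filter (fun tr => tr.1 + tr.2.1 + tr.2.2 = 0)
            (Finset.univ.image x ×ˢ Finset.univ.image y ×ˢ Finset.univ.image z)).card : ℝ)) :
    ∀ n : ℕ, ∀ ε : ℝ, 0 < ε → ε < 1 → ∀ m : ℕ, (m : ℝ) = ε * (p : ℝ) ^ n →
      ∀ x y z : Fin m → (Fin n → ZMod p),
        (∀ i, x i + y i + z i = 0) →
        Function.Injective x → Function.Injective y → Function.Injective z →
        ε ^ C * ((p : ℝ) ^ n) ^ 2 ≤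
          ((Finset.filter (fun tr => tr.1 + tr.2.1 + tr.2.2 = 0)
            (Finset.univ.image x ×ˢ Finset.univ.image y ×ˢ Finset.univ.image z)).card : ℝ) :=
  stmt_17_general p C f h hh hfh hf
end

section
/- Asymptotics of the removal exponent: define c_p ∈ (0,1) by p^{1−c_p} = inf_{0<x<1} x^{−(p−1)/3}(1 + x + x² + ⋯ + x^{p−1}). Then c_p = Θ(1/log p) as p → ∞; consequently C_p = 1 + 1/c_p = Θ(log p). -/
/-!
Write `f_p(x) = x^{-(p-1)/3} (1 + x + ⋯ + x^{p-1})`. The terms `x^j` with `j ≤ (p-1)/3` are each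
at least `x^{(p-1)/3}` and there are at least `p/3` of them, so `f_p ≥ p/3`. Pairing `x^j` with
`x^{p-1-j}` gives `1 + ⋯ + x^{p-1} ≤ p (1 + x^{p-1}) / 2`, so at `x = y^{3/(p-1)}` we get
`f_p ≤ p (1 + y³) / (2y)`, which is `189/200 · p` at `y = 4/5`. Hence `p^{-c_p}` lies between two
absolute constants in `(0, 1)`, i.e. `c_p log p` is bounded above and below by positive constants.
-/

open Real Finset

lemma natCast_div_three_le_rpow_neg_mul_geom_sum {x : ℝ} (hx0 : 0 < x) (hx1 : x ≤ 1) (n : ℕ) :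
    (n : ℝ) / 3 ≤ x ^ (-(((n : ℝ) - 1) / 3)) * ∑ j ∈ range n, x ^ j := by
  rcases Nat.eq_zero_or_pos n with rfl | hn
  · simp
  set k := (n - 1) / 3
  have hk : (k : ℝ) ≤ ((n : ℝ) - 1) / 3 := by
    rw [le_div_iff₀ (by norm_num)]
    have : k * 3 + 1 ≤ n := by omega
    have : (k : ℝ) * 3 + 1 ≤ n := by exact_mod_cast this
    linarith
  have hn_le : (n : ℝ) ≤ 3 * (k + 1) := by exact_mod_cast (by omega : n ≤ 3 * (k + 1))
  have hsum : (k + 1 : ℝ) * x ^ (((n : ℝ) - 1) / 3) ≤ ∑ j ∈ range n, x ^ j :=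
    calc (k + 1 : ℝ) * x ^ (((n : ℝ) - 1) / 3)
        ≤ ∑ _j ∈ range (k + 1), x ^ (((n : ℝ) - 1) / 3) := by simp
      _ ≤ ∑ j ∈ range (k + 1), x ^ j := by
          refine sum_le_sum fun j hj ↦ ?_
          rw [← rpow_natCast]
          have : (j : ℝ) ≤ k := by exact_mod_cast Nat.lt_succ_iff.mp (mem_range.mp hj)
          exact rpow_le_rpow_of_exponent_ge hx0 hx1 (this.trans hk)
      _ ≤ ∑ j ∈ range n, x ^ j :=
          sum_le_sum_of_subset_of_nonneg (range_subset_range.mpr (by omega))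
            fun j _ _ ↦ pow_nonneg hx0.le j
  have hcancel : x ^ (-(((n : ℝ) - 1) / 3)) * x ^ (((n : ℝ) - 1) / 3) = 1 := by
    rw [← rpow_add hx0, neg_add_cancel, rpow_zero]
  calc (n : ℝ) / 3 ≤ k + 1 := by linarith
    _ = x ^ (-(((n : ℝ) - 1) / 3)) * ((k + 1 : ℝ) * x ^ (((n : ℝ) - 1) / 3)) := by
        rw [mul_left_comm, hcancel, mul_one]
    _ ≤ x ^ (-(((n : ℝ) - 1) / 3)) * ∑ j ∈ range n, x ^ j := by gcongr

lemma two_mul_geom_sum_le {x : ℝ} (hx0 : 0 ≤ x) (hx1 : x ≤ 1) (n : ℕ) :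
    2 * ∑ j ∈ range n, x ^ j ≤ n * (1 + x ^ (n - 1)) := by
  have hpair : ∀ j ∈ range n, x ^ j + x ^ (n - 1 - j) ≤ 1 + x ^ (n - 1) := by
    intro j hj
    have hprod : x ^ j * x ^ (n - 1 - j) = x ^ (n - 1) := by
      rw [← pow_add]; congr 1; have := mem_range.mp hj; omega
    nlinarith [mul_nonneg (sub_nonneg.mpr (pow_le_one₀ hx0 hx1 (n := j)))
      (sub_nonneg.mpr (pow_le_one₀ hx0 hx1 (n := n - 1 - j)))]
  calc 2 * ∑ j ∈ range n, x ^ j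
      = ∑ j ∈ range n, (x ^ j + x ^ (n - 1 - j)) := by
        rw [sum_add_distrib, sum_range_reflect (x ^ ·) n, two_mul]
    _ ≤ ∑ _j ∈ range n, (1 + x ^ (n - 1)) := sum_le_sum hpair
    _ = n * (1 + x ^ (n - 1)) := by simp [mul_add]

lemma exists_rpow_neg_mul_geom_sum_le {n : ℕ} (hn : 2 ≤ n) {y : ℝ} (hy0 : 0 < y) (hy1 : y < 1) :
    ∃ x : ℝ, 0 < x ∧ x < 1 ∧
      x ^ (-(((n : ℝ) - 1) / 3)) * ∑ j ∈ range n, x ^ j ≤ (1 + y ^ 3) / (2 * y) * n := by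
  have hn1 : (0 : ℝ) < n - 1 := by
    have : (2 : ℝ) ≤ n := by exact_mod_cast hn
    linarith
  set x := y ^ (3 / ((n : ℝ) - 1))
  have hx0 : 0 < x := rpow_pos_of_pos hy0 _
  refine ⟨x, hx0, rpow_lt_one hy0.le hy1 (by positivity), ?_⟩
  have hfactor : x ^ (-(((n : ℝ) - 1) / 3)) = y⁻¹ := by
    rw [← rpow_mul hy0.le, ← rpow_neg_one]
    congr 1
    field_simp
  have hlast : x ^ (n - 1) = y ^ 3 := by
    rw [← rpow_natCast, ← rpow_mul hy0.le, Nat.cast_sub (by omega : 1 ≤ n), Nat.cast_one,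
      ← rpow_natCast]
    congr 1
    field_simp
    norm_num
  have hsum := two_mul_geom_sum_le hx0.le (rpow_le_one hy0.le hy1.le (by positivity)) n
  rw [hlast] at hsum
  calc x ^ (-(((n : ℝ) - 1) / 3)) * ∑ j ∈ range n, x ^ j
      ≤ y⁻¹ * (n * (1 + y ^ 3) / 2) := by rw [hfactor]; gcongr; linarith
    _ = (1 + y ^ 3) / (2 * y) * n := by field_simp

lemma mul_log_le_log_inv_of_mul_le_rpow {p a c : ℝ} (hp : 0 < p) (ha : 0 < a)
    (h : a * p ≤ p ^ (1 - c)) : c * log p ≤ log a⁻¹ := by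
  have := log_le_log (by positivity) h
  rw [log_mul ha.ne' hp.ne', log_rpow hp] at this
  rw [log_inv]
  linarith

lemma log_inv_le_mul_log_of_rpow_le_mul {p b c : ℝ} (hp : 0 < p) (h : p ^ (1 - c) ≤ b * p) :
    log b⁻¹ ≤ c * log p := by
  have hb : 0 < b := pos_of_mul_pos_left ((rpow_pos_of_pos hp _).trans_le h) hp.le
  have := log_le_log (by positivity) h
  rw [log_mul hb.ne' hp.ne', log_rpow hp] at this
  rw [log_inv]
  linarith

/-- Asymptotics of the sum-free exponent: if p^{1-c_p} equals the infimum over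
0 < x < 1 of x^{-(p-1)/3}(1 + x + ⋯ + x^{p-1}), then c_p = Θ(1/log p). -/
theorem stmt_18 :
    ∃ A B : ℝ, 0 < A ∧ 0 < B ∧
      ∀ p : ℕ, 2 ≤ p → ∀ c : ℝ, 0 < c → c < 1 →
        (p : ℝ) ^ (1 - c) =
          sInf {v : ℝ | ∃ x : ℝ, 0 < x ∧ x < 1 ∧
            v = x ^ (-(((p : ℝ) - 1) / 3)) * ∑ j ∈ Finset.range p, x ^ j} →
        A / Real.log p ≤ c ∧ c ≤ B / Real.log p := by
  refine ⟨log (189 / 200 : ℝ)⁻¹, log (3⁻¹ : ℝ)⁻¹, log_pos (by norm_num), log_pos (by norm_num), ?_⟩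
  intro p hp c _ _ hc
  have hp0 : (0 : ℝ) < p := by positivity
  have hlog : 0 < log p := log_pos (by exact_mod_cast hp)
  have hlower : ∀ v ∈ {v : ℝ | ∃ x : ℝ, 0 < x ∧ x < 1 ∧
      v = x ^ (-(((p : ℝ) - 1) / 3)) * ∑ j ∈ range p, x ^ j}, 3⁻¹ * (p : ℝ) ≤ v := by
    rintro _ ⟨x, hx0, hx1, rfl⟩
    simpa [div_eq_inv_mul] using natCast_div_three_le_rpow_neg_mul_geom_sum hx0 hx1.le p
  obtain ⟨x, hx0, hx1, hx⟩ := exists_rpow_neg_mul_geom_sum_le hp (y := 4 / 5) (by norm_num)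
    (by norm_num)
  have hge : 3⁻¹ * (p : ℝ) ≤ p ^ (1 - c) := hc ▸ le_csInf ⟨_, x, hx0, hx1, rfl⟩ hlower
  have hle : (p : ℝ) ^ (1 - c) ≤ 189 / 200 * p := by
    rw [hc]
    refine (csInf_le ⟨_, hlower⟩ ⟨x, hx0, hx1, rfl⟩).trans (hx.trans_eq ?_)
    norm_num
  rw [div_le_iff₀ hlog, le_div_iff₀ hlog]
  exact ⟨log_inv_le_mul_log_of_rpow_le_mul hp0 hle,
    mul_log_le_log_inv_of_mul_le_rpow hp0 (by norm_num) hge⟩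
end
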